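/- arXiv:2311.12784 — 4 statements merged into one kernel-verified Lean document; each statement's English description precedes it below -/
import Mathlib

section
/- For any real numbers λ ∈ [3/4, 1] and β ∈ [0, 1], we have √λ · β + √((1 − λβ)(1 − β)) ≥ e^{(λ−1)β}. -/
theorem sqrt_interp_ge_exp (l b : ℝ) (hl : l ∈ Set.Icc (3/4 : ℝ) 1)
    (hb : b ∈ Set.Icc (0 : ℝ) 1) :
    Real.sqrt l * b + Real.sqrt ((1 - l * b) * (1 - b)) ≥ Real.exp ((l - 1) * b) := by
  obtain ⟨hl1, hl2⟩ := hl
  obtain ⟨hb1, hb2⟩ := hb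
  have hl0 : (0:ℝ) ≤ l := by linarith
  have hlbl : l * b ≤ l := mul_le_of_le_one_right hl0 hb2
  have hlb : l * b ≤ 1 := by linarith
  have h1lb : (0:ℝ) ≤ 1 - l * b := by linarith
  have h1b : (0:ℝ) ≤ 1 - b := by linarith
  rw [Real.sqrt_mul h1lb]
  rcases eq_or_lt_of_le hl2 with h1 | hllt
  · -- l = 1
    rw [h1]
    simp only [Real.sqrt_one, one_mul]
    rw [Real.mul_self_sqrt h1b]
    have h2 : (1 - 1) * b = 0 := by ring
    rw [h2, Real.exp_zero]
    linarith
  · set s := Real.sqrt l with hs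
    set u := Real.sqrt (1 - l * b) with hu
    set v := Real.sqrt (1 - b) with hv
    have hs2 : s ^ 2 = l := Real.sq_sqrt hl0
    have hu2 : u ^ 2 = 1 - l * b := Real.sq_sqrt h1lb
    have hv2 : v ^ 2 = 1 - b := Real.sq_sqrt h1b
    have hsnn : 0 ≤ s := Real.sqrt_nonneg _
    have hunn : 0 ≤ u := Real.sqrt_nonneg _
    have hvnn : 0 ≤ v := Real.sqrt_nonneg _
    have hsge : 4/5 ≤ s := by
      have h1 : Real.sqrt (16/25) ≤ s := Real.sqrt_le_sqrt (by linarith)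
      have h2 : Real.sqrt (16/25) = 4/5 := by
        rw [show (16/25:ℝ) = (4/5)^2 by norm_num, Real.sqrt_sq (by norm_num)]
      linarith
    have hsle : s ≤ 1 := Real.sqrt_le_one.mpr hl2
    have h6 : (0:ℝ) ≤ 1 - s := by linarith
    have hx : (0:ℝ) < 1 - l := by linarith
    have hxq : 1 - l ≤ 1/4 := by linarith
    have hu2ge : 1 - l ≤ u ^ 2 := by rw [hu2]; linarith
    -- bound (u - v)^2
    have key1 : (u - v) ^ 2 * (u + v) ^ 2 = ((1 - l) * b) ^ 2 := by
      have h : (u - v) ^ 2 * (u + v) ^ 2 = (u ^ 2 - v ^ 2) ^ 2 := by ring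
      rw [h, hu2, hv2]; ring
    have hA : u ^ 2 ≤ (u + v) ^ 2 := by
      apply pow_le_pow_left₀ hunn (by linarith)
    have hC : (1 - l) * (u - v) ^ 2 ≤ (1 - l) * ((1 - l) * b ^ 2) := by
      have hB : (u - v) ^ 2 * u ^ 2 ≤ (u - v) ^ 2 * (u + v) ^ 2 :=
        mul_le_mul_of_nonneg_left hA (sq_nonneg _)
      have h1 : (u - v) ^ 2 * (1 - l) ≤ (u - v) ^ 2 * u ^ 2 :=
        mul_le_mul_of_nonneg_left hu2ge (sq_nonneg _)
      have h2 : ((1 - l) * b) ^ 2 = (1 - l) * ((1 - l) * b ^ 2) := by ring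
      calc (1 - l) * (u - v) ^ 2 = (u - v) ^ 2 * (1 - l) := by ring
        _ ≤ (u - v) ^ 2 * u ^ 2 := h1
        _ ≤ (u - v) ^ 2 * (u + v) ^ 2 := hB
        _ = ((1 - l) * b) ^ 2 := key1
        _ = (1 - l) * ((1 - l) * b ^ 2) := h2
    have key2 : (u - v) ^ 2 ≤ (1 - l) * b ^ 2 := le_of_mul_le_mul_left hC hx
    -- bound (1 - s)^2
    have key3 : (1 - s) * (9/5) ≤ 1 - l := by
      have h1 : (1 - s) * (1 + s) = 1 - l := by linear_combination -hs2
      have h2 : (1 - s) * (9/5) ≤ (1 - s) * (1 + s) :=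
        mul_le_mul_of_nonneg_left (by linarith) h6
      linarith
    have h5 : 1 - s ≤ 5/9 * (1 - l) := by linarith
    have key4 : (1 - s) ^ 2 ≤ 25/324 * (1 - l) := by
      have h7 : (1 - s) ^ 2 ≤ (5/9 * (1 - l)) ^ 2 := pow_le_pow_left₀ h6 h5 2
      have h9 : (1 - l) * (1 - l) ≤ (1 - l) * (1/4) := mul_le_mul_of_nonneg_left hxq hx.le
      have h8 : (5/9 * (1 - l)) ^ 2 = 25/81 * ((1 - l) * (1 - l)) := by ring
      linarith [h7, h9]
    -- the key identity
    have hD : s * b + u * v = 1 - (b * (1 - s) ^ 2 + (u - v) ^ 2) / 2 := by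
      linear_combination (b/2) * hs2 + hu2/2 + hv2/2
    set X := (1 - l) * b with hX
    have hXnn : (0:ℝ) ≤ X := mul_nonneg hx.le hb1
    have hXle : X ≤ 1/4 := by
      calc X = (1 - l) * b := rfl
        _ ≤ (1/4) * 1 := mul_le_mul hxq hb2 hb1 (by norm_num)
        _ = 1/4 := by norm_num
    have hXpos : (0:ℝ) < 1 + X := by linarith
    have hexp : Real.exp ((l - 1) * b) ≤ 1 / (1 + X) := by
      have h := Real.add_one_le_exp X
      rw [show (l - 1) * b = -X by rw [hX]; ring, Real.exp_neg, one_div]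
      exact inv_anti₀ hXpos (by linarith)
    set D1 := b * (1 - s) ^ 2 with hD1
    set D2 := (u - v) ^ 2 with hD2
    have hD1nn : 0 ≤ D1 := mul_nonneg hb1 (sq_nonneg _)
    have hD2nn : 0 ≤ D2 := sq_nonneg _
    have hd1 : D1 ≤ 25/324 * X := by
      calc D1 = b * (1 - s) ^ 2 := rfl
        _ ≤ b * (25/324 * (1 - l)) := mul_le_mul_of_nonneg_left key4 hb1
        _ = 25/324 * X := by rw [hX]; ring
    have hd2 : D2 ≤ X := by
      have hbb : b ^ 2 ≤ b := by
        rw [sq]; exact mul_le_of_le_one_left hb1 hb2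
      have h1 : (1 - l) * b ^ 2 ≤ (1 - l) * b := mul_le_mul_of_nonneg_left hbb hx.le
      calc D2 ≤ (1 - l) * b ^ 2 := key2
        _ ≤ X := h1
    have hfinal : 1 / (1 + X) ≤ s * b + u * v := by
      rw [div_le_iff₀ hXpos, hD]
      have hq1 : D1 * X ≤ 25/324 * X * X := mul_le_mul_of_nonneg_right hd1 hXnn
      have hq2 : D2 * X ≤ X * X := mul_le_mul_of_nonneg_right hd2 hXnn
      have hq3 : X * X ≤ (1/4) * X := mul_le_mul_of_nonneg_right hXle hXnn
      have hexpand : (1 - (D1 + D2) / 2) * (1 + X)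
          = 1 + X - D1/2 - D2/2 - D1 * X / 2 - D2 * X / 2 := by ring
      linarith [hq1, hq2, hq3, hd1, hd2, hXnn, hexpand]
    linarith [hexp, hfinal]
end

section
/- Let p be a probability measure on ℝ with mean 0, and for a > 0 define the measure q⁺ by dq⁺/dp(x) = 1 + min(1, max(−1, ax)). Then the difference of first moments satisfies ∫x dq⁺ − ∫x dp = ∫_{(−∞,−1/a]} (−x) dp + a·∫_{[−1/a,1/a]} x² dp + ∫_{[1/a,∞)} x dp, and this quantity is nonnegative, continuous, and nondecreasing in a. -/
/-!
Since `x * (1 + c(ax)) = x + x * c(ax)` with `c` the clip to `[-1, 1]`, the first-moment shift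
is `∫ x c(ax) dp = ∫ tiltShift a dp`. Pointwise, `x c(ax)` is `-x`, `a x²` and `x` on the regions
`x ≤ -1/a`, `|x| ≤ 1/a`, `x ≥ 1/a`, which overlap only in the `p`-null endpoints `±1/a`.
The integrand is nonnegative, dominated by `|x|`, and continuous and nondecreasing in `a`, so
dominated convergence and monotonicity of the integral give the remaining claims.
-/

open MeasureTheory Set

noncomputable def tiltShift (a x : ℝ) : ℝ := x * min 1 (max (-1) (a * x))

lemma abs_tiltShift_le (a x : ℝ) : |tiltShift a x| ≤ |x| := by
  have h : |min 1 (max (-1) (a * x))| ≤ 1 :=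
    abs_le.mpr ⟨le_min (by norm_num) (le_max_left _ _), min_le_left _ _⟩
  simpa [tiltShift, abs_mul] using mul_le_mul_of_nonneg_left h (abs_nonneg x)

lemma continuous_tiltShift : Continuous (Function.uncurry tiltShift) := by
  unfold tiltShift Function.uncurry; fun_prop

lemma tiltShift_nonneg {a : ℝ} (ha : 0 ≤ a) (x : ℝ) : 0 ≤ tiltShift a x := by
  rcases le_total 0 x with hx | hx
  · exact mul_nonneg hx (le_min zero_le_one (le_max_of_le_right (mul_nonneg ha hx)))
  · exact mul_nonneg_of_nonpos_of_nonpos hx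
      (min_le_of_right_le (max_le (by norm_num) (mul_nonpos_of_nonneg_of_nonpos ha hx)))

lemma tiltShift_mono_left {a b : ℝ} (hab : a ≤ b) (x : ℝ) : tiltShift a x ≤ tiltShift b x := by
  rcases le_total 0 x with hx | hx
  · exact mul_le_mul_of_nonneg_left
      (min_le_min le_rfl (max_le_max le_rfl (mul_le_mul_of_nonneg_right hab hx))) hx
  · exact mul_le_mul_of_nonpos_left
      (min_le_min le_rfl (max_le_max le_rfl (mul_le_mul_of_nonpos_right hab hx))) hx

lemma tiltShift_of_le_neg_inv {a x : ℝ} (ha : 0 < a) (hx : x ≤ -(1 / a)) : tiltShift a x = -x := by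
  have h := (div_le_iff₀' ha).mp (le_neg_of_le_neg hx)
  rw [tiltShift, max_eq_left (by linarith [mul_neg a x]), min_eq_right (by norm_num)]
  ring

lemma tiltShift_of_mem_Icc {a x : ℝ} (ha : 0 < a) (hx : x ∈ Icc (-(1 / a)) (1 / a)) :
    tiltShift a x = a * x ^ 2 := by
  have h₁ := (le_div_iff₀' ha).mp (neg_le.mp hx.1)
  have h₂ := (le_div_iff₀' ha).mp hx.2
  rw [tiltShift, max_eq_right (by linarith [mul_neg a x]), min_eq_right h₂]
  ring

lemma tiltShift_of_inv_le {a x : ℝ} (ha : 0 < a) (hx : 1 / a ≤ x) : tiltShift a x = x := by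
  have h := (div_le_iff₀' ha).mp hx
  rw [tiltShift, max_eq_right (by linarith), min_eq_left h, mul_one]

theorem integral_eq_Iic_add_Ioc_add_Ioi {E : Type*} [NormedAddCommGroup E] [NormedSpace ℝ E]
    {μ : Measure ℝ} {f : ℝ → E} (hf : Integrable f μ) {b c : ℝ} (hbc : b ≤ c) :
    ∫ x, f x ∂μ = ∫ x in Iic b, f x ∂μ + ∫ x in Ioc b c, f x ∂μ + ∫ x in Ioi c, f x ∂μ := by
  rw [add_assoc, ← setIntegral_union (Ioc_disjoint_Ioi le_rfl) measurableSet_Ioi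
    hf.integrableOn hf.integrableOn, Ioc_union_Ioi_eq_Ioi hbc,
    intervalIntegral.integral_Iic_add_Ioi hf.integrableOn hf.integrableOn]

theorem integral_eq_Iic_add_Icc_add_Ici {E : Type*} [NormedAddCommGroup E] [NormedSpace ℝ E]
    {μ : Measure ℝ} {f : ℝ → E} (hf : Integrable f μ) {b c : ℝ} (hbc : b ≤ c)
    (hb : μ {b} = 0) (hc : μ {c} = 0) :
    ∫ x, f x ∂μ = ∫ x in Iic b, f x ∂μ + ∫ x in Icc b c, f x ∂μ + ∫ x in Ici c, f x ∂μ := by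
  rw [integral_Icc_eq_integral_Ioc' hb, integral_Ici_eq_integral_Ioi' hc,
    integral_eq_Iic_add_Ioc_add_Ioi hf hbc]

lemma integrable_tiltShift {μ : Measure ℝ} (hμ : Integrable (fun x => x) μ) (a : ℝ) :
    Integrable (tiltShift a) μ :=
  hμ.abs.mono' (continuous_tiltShift.comp (Continuous.prodMk_right a)).aestronglyMeasurable
    (.of_forall fun x => abs_tiltShift_le a x)

lemma integral_tiltShift {μ : Measure ℝ} (hμ : Integrable (fun x => x) μ)
    (hatoms : ∀ x, μ {x} = 0) {a : ℝ} (ha : 0 < a) :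
    ∫ x, tiltShift a x ∂μ = (∫ x in Iic (-(1 / a)), (-x) ∂μ)
      + a * (∫ x in Icc (-(1 / a)) (1 / a), x ^ 2 ∂μ) + ∫ x in Ici (1 / a), x ∂μ := by
  have hc : -(1 / a) ≤ 1 / a := neg_le_self (by positivity)
  rw [integral_eq_Iic_add_Icc_add_Ici (integrable_tiltShift hμ a) hc (hatoms _) (hatoms _),
    ← integral_const_mul,
    setIntegral_congr_fun measurableSet_Iic fun x hx => tiltShift_of_le_neg_inv ha hx,
    setIntegral_congr_fun measurableSet_Icc fun x hx => tiltShift_of_mem_Icc ha hx,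
    setIntegral_congr_fun measurableSet_Ici fun x hx => tiltShift_of_inv_le ha hx]

lemma continuous_integral_tiltShift {μ : Measure ℝ} (hμ : Integrable (fun x => x) μ) :
    Continuous fun a => ∫ x, tiltShift a x ∂μ :=
  continuous_of_dominated (fun a => (integrable_tiltShift hμ a).aestronglyMeasurable)
    (fun a => .of_forall fun x => abs_tiltShift_le a x) hμ.abs
    (.of_forall fun x => continuous_tiltShift.comp (Continuous.prodMk_left x))

lemma monotone_integral_tiltShift {μ : Measure ℝ} (hμ : Integrable (fun x => x) μ) :
    Monotone fun a => ∫ x, tiltShift a x ∂μ := fun _ _ hab =>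
  integral_mono (integrable_tiltShift hμ _) (integrable_tiltShift hμ _) (tiltShift_mono_left hab)

theorem tilted_first_moment_shift_general (p : Measure ℝ)
    (hcont : ∀ x : ℝ, p {x} = 0)
    (hint : Integrable (fun x => x) p)
    (g : ℝ → ℝ)
    (hg : ∀ a : ℝ, g a =
      (∫ x in Set.Iic (-(1 / a)), (-x) ∂p)
        + a * (∫ x in Set.Icc (-(1 / a)) (1 / a), x ^ 2 ∂p)
        + ∫ x in Set.Ici (1 / a), x ∂p) :
    (∀ a : ℝ, 0 < a →
      (∫ x, x * (1 + min 1 (max (-1) (a * x))) ∂p) - (∫ x, x ∂p) = g a ∧ 0 ≤ g a) ∧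
    ContinuousOn g (Set.Ioi 0) ∧ MonotoneOn g (Set.Ioi 0) := by
  have hshift : ∀ a, (∫ x, x * (1 + min 1 (max (-1) (a * x))) ∂p) - ∫ x, x ∂p
      = ∫ x, tiltShift a x ∂p := fun a => by
    rw [sub_eq_iff_eq_add', ← integral_add hint (integrable_tiltShift hint a)]
    simp only [tiltShift, mul_one_add]
  have hg_eq : EqOn (fun a => ∫ x, tiltShift a x ∂p) g (Ioi 0) := fun a ha =>
    (integral_tiltShift hint hcont ha).trans (hg a).symm
  refine ⟨fun a ha => ⟨(hshift a).trans (hg_eq ha), ?_⟩,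
    (continuous_integral_tiltShift hint).continuousOn.congr hg_eq.symm,
    ((monotone_integral_tiltShift hint).monotoneOn _).congr hg_eq⟩
  rw [← hg_eq ha]
  exact integral_nonneg (tiltShift_nonneg ha.le)

/-- For a (atomless) probability measure `p` on ℝ with mean 0, the first-moment shift of
the tilted measure `q⁺` (density `1 + min 1 (max (-1) (a x))` w.r.t. `p`) equals
`∫_{(-∞,-1/a]} (-x) dp + a ∫_{[-1/a,1/a]} x² dp + ∫_{[1/a,∞)} x dp`; moreover this shift
is nonnegative, continuous and nondecreasing as a function of `a > 0`. -/
theorem tilted_first_moment_shift (p : Measure ℝ) [IsProbabilityMeasure p]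
    (hcont : ∀ x : ℝ, p {x} = 0)
    (hint : Integrable (fun x => x) p) (hmean : ∫ x, x ∂p = 0)
    (g : ℝ → ℝ)
    (hg : ∀ a : ℝ, g a =
      (∫ x in Set.Iic (-(1 / a)), (-x) ∂p)
        + a * (∫ x in Set.Icc (-(1 / a)) (1 / a), x ^ 2 ∂p)
        + ∫ x in Set.Ici (1 / a), x ∂p) :
    (∀ a : ℝ, 0 < a →
      (∫ x, x * (1 + min 1 (max (-1) (a * x))) ∂p) - (∫ x, x ∂p) = g a ∧ 0 ≤ g a) ∧
    ContinuousOn g (Set.Ioi 0) ∧ MonotoneOn g (Set.Ioi 0) :=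
  tilted_first_moment_shift_general p hcont hint g hg
end

section
/- Let p be a probability measure, λ = 3/4, t ∈ [0, 1/2], p* the t-trimmed version of p (p conditioned on a set of p-mass 1−t), and q = λp + (1−λ)p*. Then 1 − H²(p, q) = √λ · t + √((1 − λt)(1 − t)), where H² is the squared Hellinger distance. -/
open MeasureTheory

/-! `1 - H²(p, q) = ∫ √(dq/dp) dp` for any `q ≪ p`, since `∫ dq/dp dp = 1`. When `q` mixes `p`
with `p` conditioned on `A`, the density `dq/dp` takes one value on `A` and another off `A`, so
the affinity is a two-term sum weighted by `p A = 1 - t` and `p Aᶜ = t`. -/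

section Hellinger

variable {α : Type*} [MeasurableSpace α] (μ : Measure α)

theorem integral_comp_indicator_const [IsFiniteMeasure μ] {A : Set α} (hA : MeasurableSet A)
    (g : ℝ → ℝ) (c : ℝ) :
    ∫ x, g (A.indicator (fun _ => c) x) ∂μ = μ.real A * g c + μ.real Aᶜ * g 0 := by
  classical
  have hpiecewise : (fun x => g (A.indicator (fun _ => c) x))
      = A.piecewise (fun _ => g c) (fun _ => g 0) := by
    ext x
    by_cases hx : x ∈ A <;> simp [hx]
  rw [hpiecewise, integral_piecewise hA (integrableOn_const ..) (integrableOn_const ..),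
    setIntegral_const, setIntegral_const, smul_eq_mul, smul_eq_mul]

theorem one_sub_half_integral_sq_one_sub_sqrt [IsProbabilityMeasure μ] {f : α → ℝ}
    (hf0 : 0 ≤ᵐ[μ] f) (hf : Integrable f μ) (hf1 : ∫ x, f x ∂μ = 1) :
    1 - (1 / 2) * ∫ x, (1 - √(f x)) ^ 2 ∂μ = ∫ x, √(f x) ∂μ := by
  have hsqrt : Integrable (fun x => √(f x)) μ := by
    refine ((integrable_const 1).add hf).mono'
      (Real.continuous_sqrt.comp_aestronglyMeasurable hf.1) ?_
    filter_upwards [hf0] with x (hx : 0 ≤ f x)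
    rw [Real.norm_of_nonneg (Real.sqrt_nonneg _)]
    show √(f x) ≤ 1 + f x
    nlinarith [Real.sq_sqrt hx, Real.sqrt_nonneg (f x)]
  have hexpand : (fun x => (1 - √(f x)) ^ 2) =ᵐ[μ] fun x => 1 - 2 * √(f x) + f x := by
    filter_upwards [hf0] with x hx
    linear_combination Real.sq_sqrt hx
  have hlin : Integrable (fun x => 1 - 2 * √(f x)) μ := (integrable_const 1).sub (hsqrt.const_mul 2)
  rw [integral_congr_ae hexpand, integral_add hlin hf,
    integral_sub (integrable_const 1) (hsqrt.const_mul 2), integral_const_mul, hf1]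
  simp only [integral_const, probReal_univ, smul_eq_mul]
  ring

end Hellinger

section TrimmedMixture

variable {α : Type*} {A : Set α} {a b t : ℝ}

/-- The density with respect to `μ` of `a • μ + b • μ[·|A]` when `μ A = 1 - t`. -/
noncomputable def trimmedMixtureDensity (a b t : ℝ) (A : Set α) (x : α) : ℝ :=
  a + b * A.indicator (fun _ => 1 / (1 - t)) x

theorem trimmedMixtureDensity_nonneg (ha : 0 ≤ a) (hb : 0 ≤ b) (ht : t < 1) (x : α) :
    0 ≤ trimmedMixtureDensity a b t A x := by
  have h1t : 0 ≤ 1 / (1 - t) := by rw [one_div_nonneg]; linarith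
  exact add_nonneg ha (mul_nonneg hb (Set.indicator_nonneg (fun _ _ => h1t) x))

variable [MeasurableSpace α] {μ : Measure α} [IsProbabilityMeasure μ]

theorem integrable_trimmedMixtureDensity (hA : MeasurableSet A) :
    Integrable (trimmedMixtureDensity a b t A) μ :=
  (integrable_const a).add (((integrable_const _).indicator hA).const_mul b)

theorem integral_trimmedMixtureDensity (hA : MeasurableSet A) (hAt : μ.real A = 1 - t)
    (ht : t < 1) (hab : a + b = 1) : ∫ x, trimmedMixtureDensity a b t A x ∂μ = 1 := by
  have h1t : 1 - t ≠ 0 := by linarith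
  unfold trimmedMixtureDensity
  rw [integral_comp_indicator_const μ hA (fun y => a + b * y), probReal_compl_eq_one_sub hA, hAt]
  field_simp
  linear_combination hab

theorem integral_sqrt_trimmedMixtureDensity (hA : MeasurableSet A) (hAt : μ.real A = 1 - t)
    (ht : t < 1) (hab : a + b = 1) :
    ∫ x, √(trimmedMixtureDensity a b t A x) ∂μ = √a * t + √((1 - a * t) * (1 - t)) := by
  have h1t : 0 < 1 - t := by linarith
  have hsqrt : (1 - t) * √(a + b * (1 / (1 - t))) = √((1 - a * t) * (1 - t)) := by
    have hprod : (1 - a * t) * (1 - t) = (a + b * (1 / (1 - t))) * (1 - t) ^ 2 := by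
      field_simp
      linear_combination -hab
    rw [hprod, Real.sqrt_mul' _ (sq_nonneg _), Real.sqrt_sq h1t.le, mul_comm]
  unfold trimmedMixtureDensity
  rw [integral_comp_indicator_const μ hA (fun y => √(a + b * y)), probReal_compl_eq_one_sub hA,
    hAt, ← hsqrt]
  simp only [mul_zero, add_zero]
  ring

end TrimmedMixture

/-- For `q = (3/4) p + (1/4) p*`, where `p*` is `p` conditioned on a set `A` of
`p`-mass `1 - t`, the quantity `1 - H²(p,q)` (with `q` given by its density
`3/4 + (1/4)·1_A/(1-t)` with respect to `p`) equals `√(3/4)·t + √((1-(3/4)t)(1-t))`. -/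
theorem one_sub_hellinger_mixture (p : Measure ℝ) [IsProbabilityMeasure p]
    (A : Set ℝ) (hA : MeasurableSet A) (t : ℝ) (ht : t ∈ Set.Icc (0 : ℝ) (1 / 2))
    (hpA : p A = ENNReal.ofReal (1 - t)) :
    1 - (1 / 2) * ∫ x,
        (1 - Real.sqrt (3 / 4 + (1 / 4) * A.indicator (fun _ => 1 / (1 - t)) x)) ^ 2 ∂p
      = Real.sqrt (3 / 4) * t + Real.sqrt ((1 - (3 / 4) * t) * (1 - t)) := by
  obtain ⟨-, ht⟩ := ht
  have ht1 : t < 1 := by linarith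
  have hpA_real : p.real A = 1 - t := by
    rw [measureReal_def, hpA, ENNReal.toReal_ofReal (by linarith)]
  have hab : (3 / 4 : ℝ) + 1 / 4 = 1 := by norm_num
  change 1 - (1 / 2) * ∫ x, (1 - √(trimmedMixtureDensity (3 / 4) (1 / 4) t A x)) ^ 2 ∂p = _
  rw [one_sub_half_integral_sq_one_sub_sqrt p
      (ae_of_all _ (trimmedMixtureDensity_nonneg (by norm_num) (by norm_num) ht1))
      (integrable_trimmedMixtureDensity hA) (integral_trimmedMixtureDensity hA hpA_real ht1 hab)]
  exact integral_sqrt_trimmedMixtureDensity hA hpA_real ht1 hab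
end

section
/- Let k independent coin flips each have probability of heads at most 1/5. Then the probability that at least half of the k flips are heads is at most (4/5)^k. In particular, if k = 4.5·log(1/δ) with δ ∈ (0,1), this probability is less than δ. -/
open MeasureTheory Finset
open scoped ENNReal

/-! Chernoff's method: by Markov's inequality applied to `4 ^ #heads`, whose expectation factorises
over the independent flips, `2 ^ k · P[#heads ≥ k/2] ≤ ∏ᵢ (1 + 3 pᵢ) ≤ (8/5) ^ k`. The weight
`4 = e^t` is the optimal choice `t = log 4`. Finally `(4/5) ^ k < δ` as soon as
`k ≥ 4.5 log (1/δ)`, because `4.5 log (5/4) > 1`. -/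

theorem lintegral_pi_prod_eq_prod_of_fintype {ι : Type*} [Fintype ι]
    {α : ι → Type*} [∀ i, Fintype (α i)] [∀ i, MeasurableSpace (α i)]
    [∀ i, MeasurableSingletonClass (α i)] (μ : ∀ i, Measure (α i)) [∀ i, SigmaFinite (μ i)]
    (f : ∀ i, α i → ℝ≥0∞) :
    ∫⁻ x, ∏ i, f i (x i) ∂Measure.pi μ = ∏ i, ∫⁻ a, f i a ∂μ i := by
  classical
  simp only [lintegral_fintype, Measure.pi_singleton, ← prod_mul_distrib]
  exact (Fintype.prod_sum fun i a => f i a * μ i {a}).symm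

theorem lintegral_ite_true_le {ν : Measure Bool} [IsProbabilityMeasure ν] {t p : ℝ≥0∞}
    (hp : ν {true} ≤ p) :
    ∫⁻ b, (if b = true then 1 + t else 1) ∂ν ≤ 1 + t * p := by
  have hsum : ν {true} + ν {false} = 1 := by
    rw [← measure_union (by simp) (measurableSet_singleton false), ← measure_univ (μ := ν)]
    congr
    ext b
    cases b <;> simp
  calc ∫⁻ b, (if b = true then 1 + t else 1) ∂ν = (1 + t) * ν {true} + ν {false} := by
        simp [lintegral_fintype, add_comm]
    _ = 1 + t * ν {true} := by rw [add_mul, one_mul, add_right_comm, hsum, add_comm]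
    _ ≤ 1 + t * p := by gcongr

theorem mul_measure_pi_pow_card_true_ge_le {ι : Type*} [Fintype ι]
    (μ : ι → Measure Bool) [∀ i, IsProbabilityMeasure (μ i)] {t p : ℝ≥0∞}
    (hμ : ∀ i, μ i {true} ≤ p) (c : ℝ≥0∞) :
    c * Measure.pi μ {s | c ≤ (1 + t) ^ #{i | s i = true}} ≤ (1 + t * p) ^ Fintype.card ι := by
  have hweight (s : ι → Bool) :
      (1 + t) ^ #{i | s i = true} = ∏ i, if s i = true then 1 + t else 1 := by
    rw [← prod_filter, prod_const]
  calc c * Measure.pi μ {s | c ≤ (1 + t) ^ #{i | s i = true}}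
      ≤ ∫⁻ s, ∏ i, (if s i = true then 1 + t else 1) ∂Measure.pi μ := by
        simp only [hweight]
        exact mul_meas_ge_le_lintegral (measurable_of_finite _) c
    _ = ∏ i, ∫⁻ b, (if b = true then 1 + t else 1) ∂μ i :=
        lintegral_pi_prod_eq_prod_of_fintype μ fun _ b => if b = true then 1 + t else 1
    _ ≤ (1 + t * p) ^ Fintype.card ι :=
        prod_le_pow_card _ _ _ fun i _ => lintegral_ite_true_le (hμ i)

theorem one_lt_mul_log_five_div_four : 1 < 4.5 * Real.log (5 / 4) := by
  have h : Real.exp 2 < (5 / 4 : ℝ) ^ 9 := by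
    have he : Real.exp 2 = Real.exp 1 * Real.exp 1 := by rw [← Real.exp_add]; norm_num
    nlinarith [Real.exp_one_lt_d9, Real.exp_pos 1]
  have := (Real.lt_log_iff_exp_lt (by positivity)).2 h
  rw [Real.log_pow] at this
  push_cast at this
  linarith

theorem four_div_five_pow_lt {δ : ℝ} (hδ0 : 0 < δ) (hδ1 : δ < 1) {k : ℕ}
    (hk : 4.5 * Real.log (1 / δ) ≤ k) : (4 / 5 : ℝ) ^ k < δ := by
  have hlog : 0 < Real.log (1 / δ) := Real.log_pos (by rw [lt_div_iff₀ hδ0]; linarith)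
  rw [← Real.log_lt_log_iff (by positivity) hδ0, Real.log_pow,
    show (4 / 5 : ℝ) = (5 / 4)⁻¹ by norm_num, Real.log_inv, ← neg_lt_neg_iff, ← Real.log_inv,
    ← one_div]
  nlinarith [one_lt_mul_log_five_div_four, Real.log_pos (by norm_num : (1 : ℝ) < 5 / 4)]

/-- If `k` independent coin flips each come up heads with probability at most `1/5`, then
the probability that at least half of them are heads is at most `(4/5)^k`; in particular,
when `k = 4.5·log(1/δ)` with `δ ∈ (0,1)`, this probability is less than `δ`. -/
theorem majority_heads_bound (k : ℕ) (μ : Fin k → Measure Bool)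
    [∀ i, IsProbabilityMeasure (μ i)]
    (hμ : ∀ i, μ i {true} ≤ ENNReal.ofReal (1 / 5)) :
    (Measure.pi μ) {s | k ≤ 2 * (Finset.univ.filter fun i => s i = true).card}
        ≤ ENNReal.ofReal ((4 / 5 : ℝ) ^ k) ∧
    ∀ δ : ℝ, 0 < δ → δ < 1 → (k : ℝ) = 4.5 * Real.log (1 / δ) →
      (Measure.pi μ) {s | k ≤ 2 * (Finset.univ.filter fun i => s i = true).card}
          < ENNReal.ofReal δ := by
  have hsub : {s : Fin k → Bool | k ≤ 2 * #{i | s i = true}}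
      ⊆ {s | (2 : ℝ≥0∞) ^ k ≤ (1 + 3) ^ #{i | s i = true}} :=
    Set.ofPred_subset_ofPred.2 fun s hs => by
      rw [show (1 + 3 : ℝ≥0∞) = 2 ^ 2 by norm_num, ← pow_mul]
      exact pow_le_pow_right₀ one_le_two hs
  have hchernoff := (mul_le_mul_right (measure_mono (μ := Measure.pi μ) hsub) _).trans
    (mul_measure_pi_pow_card_true_ge_le μ hμ (2 ^ k))
  have hconst : (1 + 3 * ENNReal.ofReal (1 / 5)) ^ Fintype.card (Fin k)
      = 2 ^ k * ENNReal.ofReal ((4 / 5 : ℝ) ^ k) := by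
    rw [Fintype.card_fin, ENNReal.ofReal_pow (by norm_num), ← mul_pow, ← ENNReal.ofReal_ofNat 2,
      ← ENNReal.ofReal_ofNat 3, ← ENNReal.ofReal_one, ← ENNReal.ofReal_mul (by norm_num),
      ← ENNReal.ofReal_mul (by norm_num), ← ENNReal.ofReal_add (by norm_num) (by norm_num)]
    norm_num
  have hbound :
      Measure.pi μ {s | k ≤ 2 * #{i | s i = true}} ≤ ENNReal.ofReal ((4 / 5 : ℝ) ^ k) :=
    (ENNReal.mul_le_mul_iff_right (by simp) (by simp)).1 (hconst ▸ hchernoff)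
  exact ⟨hbound, fun δ hδ0 hδ1 hk =>
    hbound.trans_lt ((ENNReal.ofReal_lt_ofReal_iff hδ0).2 (four_div_five_pow_lt hδ0 hδ1 hk.ge))⟩
end
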